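/- arXiv:2103.09336 — 2 statements merged into one kernel-verified Lean document; each statement's English description precedes it below -/
import Mathlib

section
/- Let q be a prime power, let H(2n−1,q²) be a non-degenerate Hermitian variety of PG(2n−1,q²) with associated Hermitian polarity ⊥, let Σ be a Baer subgeometry of PG(2n−1,q²), and let τ be the Baer involution of PG(2n−1,q²) fixing Σ pointwise. Then H(2n−1,q²) induces a polarity on Σ (i.e., P^⊥ ∩ Σ is a hyperplane of Σ for every point P of Σ) if and only if τ fixes H(2n−1,q²) setwise. -/
open Module

/-- A (possibly Hermitian) sesquilinear form with respect to the field
automorphism `σ`: additive in both arguments, linear in the first one,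
`σ`-semilinear in the second one, and conjugate-symmetric. -/
structure SesquiForm (E : Type*) [Field E] (σ : E → E) (V : Type*) [AddCommGroup V]
    [Module E V] where
  toFun : V → V → E
  add_left : ∀ x y z, toFun (x + y) z = toFun x z + toFun y z
  smul_left : ∀ (c : E) (x y : V), toFun (c • x) y = c * toFun x y
  add_right : ∀ x y z, toFun x (y + z) = toFun x y + toFun x z
  smul_right : ∀ (c : E) (x y : V), toFun x (c • y) = σ c * toFun x y
  conj_symm : ∀ x y, toFun y x = σ (toFun x y)

/-- Non-degeneracy of a sesquilinear form. -/
def SesquiForm.Nondeg {E V : Type*} [Field E] {σ : E → E} [AddCommGroup V] [Module E V]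
    (B : SesquiForm E σ V) : Prop :=
  ∀ v : V, (∀ w : V, B.toFun v w = 0) → v = 0

/-- `W` is an `F`-form of the `E`-vector space `V` of `E`-dimension `m`
(here `E` is a quadratic extension of `F`): the `F`-subspace `W` has `F`-dimension `m`
and spans `V` over `E`.  Such a `W` determines a Baer subgeometry of `PG(V)`. -/
def IsBaerForm (E : Type*) {V : Type*} {F : Type*} [Field F] [Field E] [Algebra F E]
    [AddCommGroup V] [Module E V] [Module F V] [IsScalarTower F E V]
    (m : ℕ) (W : Submodule F V) : Prop :=
  Submodule.span E (W : Set V) = ⊤ ∧ finrank F ↥W = m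

section Baer

variable (F : Type*) {E V : Type*} [Field F] [Field E] [Algebra F E]
  [AddCommGroup V] [Module E V] [Module F V] [IsScalarTower F E V]

/-- The set of points of the Baer subgeometry of `PG(V)` determined by the `F`-form `W`:
the `1`-dimensional `E`-subspaces spanned by nonzero vectors of `W`. -/
def baerPts (W : Submodule F V) : Set (Submodule E V) :=
  {p | finrank E ↥p = 1 ∧ ∃ v ∈ W, v ≠ 0 ∧ v ∈ p}

/-- `S` is (the point set of) a Baer subgeometry of `PG(V)` embedded in the Hermitian
variety determined by `B` (all of its points lie on the variety). -/
def EmbBaerSubgeom {σ : E → E} (B : SesquiForm E σ V) (m : ℕ)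
    (S : Set (Submodule E V)) : Prop :=
  ∃ W : Submodule F V, IsBaerForm E m W ∧ (∀ v ∈ W, B.toFun v v = 0) ∧ S = baerPts F W

end Baer

/-!
Both conditions are equivalent to: for every point `v` of `Σ` there is `μ ≠ 0` with
`σ (B v w) = μ * B v w` for all points `w` of `Σ`.
If `H` induces a polarity, write a point `w` of `Σ` as `u + c • w₀` with `u` in the polar
hyperplane of `v` and `c ∈ GF(q)`; this gives `μ = σ (B v w₀) / B v w₀`. Conversely, the
condition makes `v^⊥` a `τ`-invariant hyperplane. By non-degeneracy, `μ` does not depend on `v`,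
so `σ (B x y) = μ * B (τ x) (τ y)` for all `x, y`, and `τ` preserves `H`.
If `τ` preserves `H`, then for points `v, w` of `Σ` the zeros of `c ↦ B (v + c w) (v + c w)`
are stable under `σ`. Norm and trace of `GF(q²)/GF(q)` are surjective, so this
forces `σ (B v w) = ± B v w`, and additivity makes the sign independent of `w`.
-/

section FiniteField

variable {F E : Type*} [Field F] [Field E] [Finite E] [Algebra F E]

theorem AlgEquiv.eq_one_or_eq_of_finrank_eq_two (hFE : finrank F E = 2) {σ : E ≃ₐ[F] E}
    (hσ : σ ≠ 1) (g : E ≃ₐ[F] E) : g = 1 ∨ g = σ := by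
  obtain ⟨g₀, -, huniq⟩ :=
    (Nat.card_eq_two_iff' (1 : Gal(E/F))).mp ((IsGalois.card_aut_eq_finrank F E).trans hFE)
  by_cases hg : g = 1
  · exact .inl hg
  · exact .inr ((huniq g hg).trans (huniq σ hσ).symm)

theorem mem_range_algebraMap_of_apply_eq (hFE : finrank F E = 2) {σ : E ≃ₐ[F] E} (hσ : σ ≠ 1)
    {x : E} (hx : σ x = x) : x ∈ Set.range (algebraMap F E) := by
  rw [IsGalois.mem_range_algebraMap_iff_fixed]
  intro g
  rcases AlgEquiv.eq_one_or_eq_of_finrank_eq_two hFE hσ g with rfl | rfl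
  · rfl
  · exact hx

theorem algebraMap_norm_eq_mul_apply (hFE : finrank F E = 2) {σ : E ≃ₐ[F] E} (hσ : σ ≠ 1)
    (c : E) : algebraMap F E (Algebra.norm F c) = c * σ c := by
  rw [Algebra.norm_eq_prod_automorphisms, Fintype.prod_eq_mul 1 σ hσ.symm]
  · rfl
  · intro g hg
    exact ((AlgEquiv.eq_one_or_eq_of_finrank_eq_two hFE hσ g).elim hg.1 hg.2).elim

theorem algebraMap_trace_eq_add_apply (hFE : finrank F E = 2) {σ : E ≃ₐ[F] E} (hσ : σ ≠ 1)
    (c : E) : algebraMap F E (Algebra.trace F E c) = c + σ c := by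
  rw [trace_eq_sum_automorphisms, Fintype.sum_eq_add 1 σ hσ.symm]
  · rfl
  · intro g hg
    exact ((AlgEquiv.eq_one_or_eq_of_finrank_eq_two hFE hσ g).elim hg.1 hg.2).elim

theorem exists_mul_apply_eq (hFE : finrank F E = 2) {σ : E ≃ₐ[F] E} (hσ : σ ≠ 1) {ν : E}
    (hν : σ ν = ν) : ∃ c, c * σ c = ν := by
  obtain ⟨a, rfl⟩ := mem_range_algebraMap_of_apply_eq hFE hσ hν
  obtain ⟨c, rfl⟩ := FiniteField.norm_surjective F E a
  exact ⟨c, (algebraMap_norm_eq_mul_apply hFE hσ c).symm⟩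

theorem exists_add_apply_eq (hFE : finrank F E = 2) {σ : E ≃ₐ[F] E} (hσ : σ ≠ 1) {ν : E}
    (hν : σ ν = ν) : ∃ c, c + σ c = ν := by
  obtain ⟨a, rfl⟩ := mem_range_algebraMap_of_apply_eq hFE hσ hν
  obtain ⟨c, rfl⟩ := Algebra.trace_surjective F E a
  exact ⟨c, (algebraMap_trace_eq_add_apply hFE hσ c).symm⟩

end FiniteField

section Sign

variable {E : Type*} [Field E]

/-- `B (v + c • w) (v + c • w)` for a Hermitian form `B` with `a = B v v`, `d = B w w` and
`z = B v w`. -/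
def hermitianBinary (σ : E → E) (a d z c : E) : E :=
  a + c * σ c * d + σ c * z + c * σ z

variable {σ : E →+* E}

theorem hermitianBinary_sub_apply (hinv : Function.Involutive σ) (a d z c : E) :
    hermitianBinary σ a d z c - hermitianBinary σ a d z (σ c) = (σ c - c) * (z - σ z) := by
  simp only [hermitianBinary, hinv c]
  ring

theorem hermitianBinary_eq_zero_of_add_apply_eq (hinv : Function.Involutive σ) {a z x : E}
    (hz : z ≠ 0) (hx : x + σ x = -a) : hermitianBinary σ a 0 z (σ x / σ z) = 0 := by
  have hσz : σ z ≠ 0 := (map_ne_zero σ).mpr hz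
  simp only [hermitianBinary, mul_zero, add_zero, map_div₀, hinv x, hinv z,
    div_mul_cancel₀ _ hz, div_mul_cancel₀ _ hσz]
  linear_combination hx

theorem hermitianBinary_eq_zero_of_mul_apply_eq {a d z e s : E}
    (hd : σ d = d) (hd0 : d ≠ 0) (he : e * σ e * d ^ 2 = z * σ z - a * d) (hs : s * σ s = 1) :
    hermitianBinary σ a d z (e * s - z / d) = 0 := by
  simp only [hermitianBinary, map_sub, map_mul, map_div₀, hd]
  field_simp
  linear_combination he + d ^ 2 * e * σ e * hs

theorem eq_zero_of_forall_mul_apply_eq_one (hinv : Function.Involutive σ) {θ : E} (hθ : σ θ ≠ θ)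
    {e : E} (he : ∀ s, s * σ s = 1 → σ (e * s - e) = e * s - e) : e = 0 := by
  have key : ∀ t, σ t ≠ t → σ e * t + e * σ t = 0 := by
    intro t ht
    have ht0 : t ≠ 0 := fun h => ht (by rw [h, map_zero])
    have hσt0 : σ t ≠ 0 := (map_ne_zero σ).mpr ht0
    have hs := he (σ t / t) (by rw [map_div₀, hinv t]; field_simp)
    simp only [map_sub, map_mul, map_div₀, hinv t] at hs
    field_simp at hs
    have : (t - σ t) * (σ e * t + e * σ t) = 0 := by linear_combination hs
    exact (mul_eq_zero.mp this).resolve_left (sub_ne_zero.mpr (Ne.symm ht))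
  have h1 := key θ hθ
  have h2 := key (θ + 1) (by rw [map_add, map_one]; exact fun h => hθ (add_right_cancel h))
  rw [map_add, map_one] at h2
  have hσe : σ e = -e := by linear_combination h2 - h1
  have : e * (σ θ - θ) = 0 := by linear_combination h1 - θ * hσe
  exact (mul_eq_zero.mp this).resolve_right (sub_ne_zero.mpr hθ)

theorem apply_eq_or_eq_neg_of_hermitianBinary (hinv : Function.Involutive σ) {θ : E}
    (hθ : σ θ ≠ θ) (hnorm : ∀ ν, σ ν = ν → ∃ c, c * σ c = ν)
    (htrace : ∀ ν, σ ν = ν → ∃ c, c + σ c = ν) {a d z : E} (ha : σ a = a) (hd : σ d = d)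
    (h : ∀ c, hermitianBinary σ a d z c = 0 → hermitianBinary σ a d z (σ c) = 0) :
    σ z = z ∨ σ z = -z := by
  by_contra! hz
  have hroot : ∀ c, hermitianBinary σ a d z c = 0 → σ c = c := by
    intro c hc
    have := hermitianBinary_sub_apply hinv a d z c
    rw [hc, h c hc, sub_zero, eq_comm, mul_eq_zero] at this
    exact sub_eq_zero.mp (this.resolve_right (sub_ne_zero.mpr (Ne.symm hz.1)))
  -- For `d = 0` the roots include `σ x / σ z` whenever `x + σ x = -a`; for `d ≠ 0` they
  -- include `e * s - z / d` whenever `s * σ s = 1`, where `e * σ e = (z * σ z - a * d) / d ^ 2`.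
  rcases eq_or_ne d 0 with rfl | hd0
  · have hz0 : z ≠ 0 := fun h => hz.1 (by rw [h, map_zero])
    have hσz0 : σ z ≠ 0 := (map_ne_zero σ).mpr hz0
    obtain ⟨x, hx⟩ := htrace (-a) (by rw [map_neg, ha])
    set t := θ - σ θ
    have ht : σ t = -t := by simp only [t, map_sub, hinv θ]; ring
    have ht0 : t ≠ 0 := sub_ne_zero.mpr (Ne.symm hθ)
    have h1 := hroot _ (hermitianBinary_eq_zero_of_add_apply_eq hinv hz0 hx)
    have h2 := hroot _ (hermitianBinary_eq_zero_of_add_apply_eq hinv (x := x + t) hz0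
      (by rw [map_add, ht]; linear_combination hx))
    simp only [map_div₀, map_add, map_neg, hinv x, hinv z, ht, neg_neg] at h1 h2
    field_simp at h1 h2
    have : t * (σ z + z) = 0 := by linear_combination h2 - h1
    exact hz.2 (by linear_combination (mul_eq_zero.mp this).resolve_left ht0)
  · obtain ⟨e, he⟩ := hnorm ((z * σ z - a * d) / d ^ 2)
      (by simp only [map_div₀, map_sub, map_mul, map_pow, ha, hd, hinv z]; ring)
    have he' : e * σ e * d ^ 2 = z * σ z - a * d := by rw [he]; field_simp
    have hroot_s : ∀ s, s * σ s = 1 → σ (e * s - z / d) = e * s - z / d := fun s hs =>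
      hroot _ (hermitianBinary_eq_zero_of_mul_apply_eq hd hd0 he' hs)
    have he0 : e = 0 := by
      refine eq_zero_of_forall_mul_apply_eq_one hinv hθ fun s hs => ?_
      have h1 := hroot_s 1 (by rw [map_one, one_mul])
      have h2 := hroot_s s hs
      simp only [map_sub, map_mul, map_one] at h1 h2 ⊢
      linear_combination h2 - h1
    have := hroot_s 1 (by rw [map_one, one_mul])
    simp only [he0, zero_mul, zero_sub, map_neg, map_div₀, hd] at this
    field_simp at this
    exact hz.1 (by linear_combination -this)

end Sign

theorem Module.Basis.map_eq_sum_of_apply_eq {E V ι : Type*} [Field E] [AddCommGroup V]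
    [Module E V] [Fintype ι] {σ : E →+* E} (b : Basis ι E V) {τ : V →ₛₗ[σ] V}
    (hb : ∀ i, τ (b i) = b i) (x : V) : τ x = ∑ i, σ (b.repr x i) • b i := by
  conv_lhs => rw [← b.sum_repr x]
  simp only [map_sum, map_smulₛₗ, hb]

theorem Submodule.sup_span_singleton_eq_top {E V : Type*} [Field E] [AddCommGroup V] [Module E V]
    [FiniteDimensional E V] {U : Submodule E V} (hU : finrank E U + 1 = finrank E V) {w : V}
    (hw : w ∉ U) : U ⊔ E ∙ w = ⊤ := by
  have hw0 : w ≠ 0 := fun h => hw (h ▸ U.zero_mem)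
  apply Submodule.eq_top_of_finrank_eq
  have := Submodule.finrank_sup_add_finrank_inf_eq U (E ∙ w)
  rw [(Submodule.disjoint_span_singleton_of_notMem hw).eq_bot, finrank_bot,
    finrank_span_singleton hw0] at this
  omega

namespace SesquiForm

variable {E V ι : Type*} [Field E] [AddCommGroup V] [Module E V] [Fintype ι] {σ : E →+* E}

instance : CoeFun (SesquiForm E σ V) fun _ => V → V → E := ⟨SesquiForm.toFun⟩

def toLinearMap₂ (B : SesquiForm E σ V) : V →ₗ[E] V →ₛₗ[σ] E :=
  LinearMap.mk₂'ₛₗ (RingHom.id E) σ B.toFun B.add_left B.smul_left B.add_right B.smul_right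

theorem toLinearMap₂_apply (B : SesquiForm E σ V) (x y : V) : B.toLinearMap₂ x y = B x y := rfl

@[simp]
theorem zero_apply (B : SesquiForm E σ V) (y : V) : B 0 y = 0 :=
  LinearMap.map_zero₂ B.toLinearMap₂ y

theorem conj_apply_self (B : SesquiForm E σ V) (x : V) : σ (B x x) = B x x :=
  (B.conj_symm x x).symm

theorem apply_eq_sum_left (B : SesquiForm E σ V) (b : Basis ι E V) (x y : V) :
    B x y = ∑ i, b.repr x i * B (b i) y := by
  conv_lhs => rw [← toLinearMap₂_apply, ← b.sum_repr x]
  simp only [map_sum, LinearMap.sum_apply, map_smul, LinearMap.smul_apply, smul_eq_mul,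
    toLinearMap₂_apply]

theorem apply_eq_sum_right (B : SesquiForm E σ V) (b : Basis ι E V) (x y : V) :
    B x y = ∑ i, σ (b.repr y i) * B x (b i) := by
  conv_lhs => rw [← toLinearMap₂_apply, ← b.sum_repr y]
  simp only [map_sum, map_smulₛₗ, smul_eq_mul, toLinearMap₂_apply]

theorem map_apply_eq_sum (B : SesquiForm E σ V) (b : Basis ι E V) {τ : V →ₛₗ[σ] V}
    (hb : ∀ i, τ (b i) = b i) (x y : V) : B (τ x) y = ∑ i, σ (b.repr x i) * B (b i) y := by
  rw [b.map_eq_sum_of_apply_eq hb, ← toLinearMap₂_apply]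
  simp [LinearMap.sum_apply, toLinearMap₂_apply]

theorem apply_map_eq_sum (B : SesquiForm E σ V) (hinv : Function.Involutive σ) (b : Basis ι E V)
    {τ : V →ₛₗ[σ] V} (hb : ∀ i, τ (b i) = b i) (x y : V) :
    B x (τ y) = ∑ i, b.repr y i * B x (b i) := by
  rw [b.map_eq_sum_of_apply_eq hb, ← toLinearMap₂_apply]
  simp [hinv _, toLinearMap₂_apply]

def InducesPolarity (B : SesquiForm E σ V) (τ : V → V) : Prop :=
  ∀ v, v ≠ 0 → τ v = v →
    ∃ U : Submodule E V, finrank E U = finrank E V - 1 ∧ (∀ x, x ∈ U ↔ τ x ∈ U) ∧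
      ∀ p : Submodule E V, finrank E p = 1 → (∃ u ∈ p, u ≠ 0 ∧ τ u = u) →
        (p ≤ U ↔ ∀ u ∈ p, B v u = 0)

theorem apply_add_smul_self (B : SesquiForm E σ V) (v w : V) (c : E) :
    B (v + c • w) (v + c • w) = hermitianBinary σ (B v v) (B w w) (B v w) c := by
  simp only [hermitianBinary, B.add_left, B.add_right, B.smul_left, B.smul_right,
    B.conj_symm v w]
  ring

theorem exists_apply_basis_ne_zero {B : SesquiForm E σ V} (hB : B.Nondeg) (b : Basis ι E V)
    {v : V} (hv : v ≠ 0) : ∃ i, B v (b i) ≠ 0 := by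
  by_contra! h
  exact hv (hB v fun w => by rw [B.apply_eq_sum_right b]; simp [h])

theorem exists_fixed_apply_ne_zero {B : SesquiForm E σ V} (hB : B.Nondeg) (b : Basis ι E V)
    {τ : V →ₛₗ[σ] V} (hb : ∀ i, τ (b i) = b i) {v v' : V} (hv : v ≠ 0) (hv' : v' ≠ 0) :
    ∃ w, τ w = w ∧ B v w ≠ 0 ∧ B v' w ≠ 0 := by
  obtain ⟨i, hi⟩ := exists_apply_basis_ne_zero hB b hv
  obtain ⟨j, hj⟩ := exists_apply_basis_ne_zero hB b hv'
  by_cases h₁ : B v' (b i) ≠ 0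
  · exact ⟨b i, hb i, hi, h₁⟩
  by_cases h₂ : B v (b j) ≠ 0
  · exact ⟨b j, hb j, h₂, hj⟩
  push Not at h₁ h₂
  refine ⟨b i + b j, by rw [map_add, hb, hb], ?_, ?_⟩ <;> simp [B.add_right, h₁, h₂, hi, hj]

theorem mul_eq_one_of_conj_eq_mul (B : SesquiForm E σ V) (hinv : Function.Involutive σ)
    {v w : V} {μ ν : E} (hv : σ (B v w) = μ * B v w) (hw : σ (B w v) = ν * B w v)
    (hvw : B v w ≠ 0) : ν * μ = 1 := by
  rw [B.conj_symm v w, hinv, hv] at hw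
  exact mul_right_cancel₀ hvw (by linear_combination -hw)

theorem conj_apply_eq_mul_apply_map_of_basis (B : SesquiForm E σ V) (hinv : Function.Involutive σ)
    (b : Basis ι E V) {τ : V →ₛₗ[σ] V} (hb : ∀ i, τ (b i) = b i) {v : V} {μ : E}
    (h : ∀ i, σ (B v (b i)) = μ * B v (b i)) (x : V) : σ (B v x) = μ * B v (τ x) := by
  rw [B.apply_eq_sum_right b, B.apply_map_eq_sum hinv b hb, map_sum, Finset.mul_sum]
  refine Finset.sum_congr rfl fun i _ => ?_
  rw [map_mul, hinv, h]
  ring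

theorem conj_apply_eq_mul_apply_map (B : SesquiForm E σ V) (hinv : Function.Involutive σ)
    (b : Basis ι E V) {τ : V →ₛₗ[σ] V} (hb : ∀ i, τ (b i) = b i) {μ : E}
    (h : ∀ v w, τ v = v → τ w = w → σ (B v w) = μ * B v w) (x y : V) :
    σ (B x y) = μ * B (τ x) (τ y) := by
  have hrow : ∀ i y, σ (B (b i) y) = μ * B (b i) (τ y) := fun i =>
    B.conj_apply_eq_mul_apply_map_of_basis hinv b hb fun j => h _ _ (hb i) (hb j)
  rw [B.apply_eq_sum_left b, B.map_apply_eq_sum b hb, map_sum, Finset.mul_sum]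
  refine Finset.sum_congr rfl fun i _ => ?_
  rw [map_mul, hrow]
  ring

theorem exists_forall_conj_eq_mul {B : SesquiForm E σ V} (hinv : Function.Involutive σ)
    (hB : B.Nondeg) (b : Basis ι E V) {τ : V →ₛₗ[σ] V} (hb : ∀ i, τ (b i) = b i)
    (h : ∀ v, τ v = v → ∃ μ ≠ 0, ∀ w, τ w = w → σ (B v w) = μ * B v w) :
    ∃ μ ≠ 0, ∀ v w, τ v = v → τ w = w → σ (B v w) = μ * B v w := by
  by_cases h₀ : ∃ v₀, τ v₀ = v₀ ∧ v₀ ≠ 0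
  swap
  · push Not at h₀
    exact ⟨1, one_ne_zero, fun v w hv _ => by simp [h₀ v hv]⟩
  obtain ⟨v₀, hv₀, hv₀0⟩ := h₀
  obtain ⟨μ, hμ, hμv₀⟩ := h v₀ hv₀
  refine ⟨μ, hμ, fun v w hv hw => ?_⟩
  rcases eq_or_ne v 0 with rfl | hv0
  · simp
  obtain ⟨μv, -, hμv⟩ := h v hv
  obtain ⟨w', hw', h₁, h₂⟩ := exists_fixed_apply_ne_zero hB b hb hv0 hv₀0
  obtain ⟨ν, hν, hνw'⟩ := h w' hw'
  have e₁ := B.mul_eq_one_of_conj_eq_mul hinv (hμv w' hw') (hνw' v hv) h₁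
  have e₂ := B.mul_eq_one_of_conj_eq_mul hinv (hμv₀ w' hw') (hνw' v₀ hv₀) h₂
  rw [← mul_left_cancel₀ hν (e₁.trans e₂.symm)]
  exact hμv w hw

theorem apply_self_eq_zero_iff_map {B : SesquiForm E σ V} (hinv : Function.Involutive σ)
    (hB : B.Nondeg) (b : Basis ι E V) {τ : V →ₛₗ[σ] V} (hb : ∀ i, τ (b i) = b i)
    (h : ∀ v, τ v = v → ∃ μ ≠ 0, ∀ w, τ w = w → σ (B v w) = μ * B v w) (x : V) :
    B x x = 0 ↔ B (τ x) (τ x) = 0 := by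
  obtain ⟨μ, hμ, hμB⟩ := exists_forall_conj_eq_mul hinv hB b hb h
  rw [← map_eq_zero σ, B.conj_apply_eq_mul_apply_map hinv b hb hμB, mul_eq_zero, or_iff_right hμ]

theorem exists_conj_eq_mul_of_forall_eq_or_eq_neg (B : SesquiForm E σ V) {τ : V →ₛₗ[σ] V}
    {v : V} (h : ∀ w, τ w = w → σ (B v w) = B v w ∨ σ (B v w) = -B v w) :
    ∃ μ ≠ 0, ∀ w, τ w = w → σ (B v w) = μ * B v w := by
  by_cases hall : ∀ w, τ w = w → σ (B v w) = B v w
  · exact ⟨1, one_ne_zero, fun w hw => by rw [one_mul, hall w hw]⟩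
  push Not at hall
  obtain ⟨w₂, hw₂, hne⟩ := hall
  have hw₂' : σ (B v w₂) = -B v w₂ := (h w₂ hw₂).resolve_left hne
  refine ⟨-1, by norm_num, fun w hw => ?_⟩
  rw [neg_one_mul]
  refine (h w hw).elim (fun hpos => ?_) id
  -- the sign of the fixed vector `w + w₂` is inconsistent with `+1` for `w` unless `B v w = 0`
  rcases h (w + w₂) (by rw [map_add, hw, hw₂]) with hsum | hsum <;>
    rw [B.add_right, map_add, hpos, hw₂'] at hsum
  · exact absurd (by linear_combination hw₂' + hsum) hne
  · linear_combination hpos + hsum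

theorem exists_fixed_eq_add_smul {τ : V →ₛₗ[σ] V} {U : Submodule E V}
    (hU : ∀ x, x ∈ U ↔ τ x ∈ U) {w₀ : V} (hw₀ : τ w₀ = w₀) (hw₀U : w₀ ∉ U)
    (hsup : U ⊔ E ∙ w₀ = ⊤) {w : V} (hw : τ w = w) :
    ∃ u ∈ U, τ u = u ∧ ∃ c, σ c = c ∧ w = u + c • w₀ := by
  obtain ⟨u, hu, y, hy, rfl⟩ := Submodule.mem_sup.mp (hsup ▸ Submodule.mem_top : w ∈ U ⊔ E ∙ w₀)
  obtain ⟨c, rfl⟩ := Submodule.mem_span_singleton.mp hy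
  rw [map_add, map_smulₛₗ, hw₀] at hw
  have hdiff : (c - σ c) • w₀ ∈ U := by
    have : (c - σ c) • w₀ = τ u - u := by linear_combination (norm := module) -hw
    exact this ▸ U.sub_mem ((hU u).mp hu) hu
  have hc : σ c = c := by
    by_contra hc
    exact hw₀U ((Submodule.smul_mem_iff U (sub_ne_zero.mpr (Ne.symm hc))).mp hdiff)
  rw [hc] at hw
  exact ⟨u, hu, add_right_cancel hw, c, hc, rfl⟩

theorem exists_conj_eq_mul_of_inducesPolarity {B : SesquiForm E σ V} (b : Basis ι E V)
    {τ : V →ₛₗ[σ] V} (hb : ∀ i, τ (b i) = b i) (hP : B.InducesPolarity τ) {v : V}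
    (hv : τ v = v) : ∃ μ ≠ 0, ∀ w, τ w = w → σ (B v w) = μ * B v w := by
  have := Module.Finite.of_basis b
  rcases eq_or_ne v 0 with rfl | hv0
  · exact ⟨1, one_ne_zero, fun w _ => by simp⟩
  obtain ⟨U, hUdim, hU, hUpts⟩ := hP v hv0 hv
  have hmem : ∀ u, τ u = u → (u ∈ U ↔ B v u = 0) := by
    intro u hu
    rcases eq_or_ne u 0 with rfl | hu0
    · simp [B.conj_symm 0 v]
    rw [← Submodule.span_singleton_le_iff_mem, hUpts _ (finrank_span_singleton hu0)
      ⟨u, Submodule.mem_span_singleton_self u, hu0, hu⟩]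
    refine ⟨fun h => h u (Submodule.mem_span_singleton_self u), fun h x hx => ?_⟩
    obtain ⟨c, rfl⟩ := Submodule.mem_span_singleton.mp hx
    rw [B.smul_right, h, mul_zero]
  have hUdim' : finrank E U + 1 = finrank E V := by
    have := (finrank_pos_iff_exists_ne_zero (R := E)).mpr ⟨v, hv0⟩
    omega
  obtain ⟨i, hi⟩ : ∃ i, b i ∉ U := by
    by_contra! h
    have hUtop : U = ⊤ :=
      eq_top_iff.mpr (b.span_eq ▸ Submodule.span_le.mpr (Set.range_subset_iff.mpr h))
    rw [hUtop, finrank_top] at hUdim'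
    omega
  have hz : B v (b i) ≠ 0 := fun h => hi ((hmem _ (hb i)).mpr h)
  refine ⟨σ (B v (b i)) / B v (b i), div_ne_zero ((map_ne_zero σ).mpr hz) hz, fun w hw => ?_⟩
  obtain ⟨u, hu, hτu, c, hc, rfl⟩ := exists_fixed_eq_add_smul hU (hb i) hi
    (Submodule.sup_span_singleton_eq_top hUdim' hi) hw
  rw [B.add_right, B.smul_right, (hmem u hτu).mp hu, zero_add, hc, map_mul, hc]
  field_simp

theorem inducesPolarity_of_forall_exists_conj_eq_mul {B : SesquiForm E σ V}
    (hinv : Function.Involutive σ) (hB : B.Nondeg) (b : Basis ι E V) {τ : V →ₛₗ[σ] V}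
    (hb : ∀ i, τ (b i) = b i) (h : ∀ v, τ v = v → ∃ μ ≠ 0, ∀ w, τ w = w → σ (B v w) = μ * B v w) :
    B.InducesPolarity τ := by
  have := Module.Finite.of_basis b
  intro v hv0 hv
  obtain ⟨μ, hμ, hμv⟩ := h v hv
  -- `v^⊥`, as the kernel of the linear (rather than semilinear) functional `x ↦ B x v`
  set U := LinearMap.ker (B.toLinearMap₂.flip v)
  have hmem : ∀ x, x ∈ U ↔ B v x = 0 := fun x => by
    rw [LinearMap.mem_ker, LinearMap.flip_apply, toLinearMap₂_apply, B.conj_symm v x, map_eq_zero]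
  have hne : B.toLinearMap₂.flip v ≠ 0 := by
    obtain ⟨i, hi⟩ := exists_apply_basis_ne_zero hB b hv0
    exact fun h0 => hi ((hmem (b i)).mp (by simp [U, h0]))
  refine ⟨U, ?_, fun x => ?_, fun p _ _ => ?_⟩
  · exact Nat.eq_sub_of_add_eq (Module.Dual.finrank_ker_add_one_of_ne_zero hne)
  · rw [hmem, hmem, ← map_eq_zero σ,
      B.conj_apply_eq_mul_apply_map_of_basis hinv b hb fun i => hμv _ (hb i),
      mul_eq_zero, or_iff_right hμ]
  · simp only [SetLike.le_def, hmem]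

theorem hermitianBinary_apply_eq_zero_of_forall_apply_self_eq_zero_iff (B : SesquiForm E σ V)
    {τ : V →ₛₗ[σ] V} (h : ∀ x, B x x = 0 ↔ B (τ x) (τ x) = 0) {v w : V} (hv : τ v = v)
    (hw : τ w = w) {c : E} (hc : hermitianBinary σ (B v v) (B w w) (B v w) c = 0) :
    hermitianBinary σ (B v v) (B w w) (B v w) (σ c) = 0 := by
  rw [← apply_add_smul_self] at hc ⊢
  simpa only [map_add, map_smulₛₗ, hv, hw] using (h _).mp hc

theorem inducesPolarity_iff (hinv : Function.Involutive σ) {θ : E} (hθ : σ θ ≠ θ)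
    (hnorm : ∀ ν, σ ν = ν → ∃ c, c * σ c = ν) (htrace : ∀ ν, σ ν = ν → ∃ c, c + σ c = ν)
    {B : SesquiForm E σ V} (hB : B.Nondeg) (b : Basis ι E V) {τ : V →ₛₗ[σ] V}
    (hb : ∀ i, τ (b i) = b i) :
    B.InducesPolarity τ ↔ ∀ x, B x x = 0 ↔ B (τ x) (τ x) = 0 := by
  constructor
  · exact fun hP => apply_self_eq_zero_iff_map hinv hB b hb fun v hv =>
      exists_conj_eq_mul_of_inducesPolarity b hb hP hv
  · refine fun h => inducesPolarity_of_forall_exists_conj_eq_mul hinv hB b hb fun v hv =>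
      B.exists_conj_eq_mul_of_forall_eq_or_eq_neg fun w hw => ?_
    exact apply_eq_or_eq_neg_of_hermitianBinary hinv hθ hnorm htrace (B.conj_apply_self v)
      (B.conj_apply_self w)
      fun c => B.hermitianBinary_apply_eq_zero_of_forall_apply_self_eq_zero_iff h hv hw

end SesquiForm

theorem baer_polarity_iff_involution_fixes_hermitian_general
    (F E : Type) [Field F] [Field E] [Fintype E] [Algebra F E]
    (hFE : finrank F E = 2)
    (σ : E ≃ₐ[F] E) (hσ : σ ≠ AlgEquiv.refl) (hinv : ∀ x, σ (σ x) = x)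
    (n : ℕ)
    (B : SesquiForm E (⇑σ) (Fin (2*n) → E)) (hB : B.Nondeg)
    (τ : (Fin (2*n) → E) → (Fin (2*n) → E))
    (hτadd : ∀ x y, τ (x + y) = τ x + τ y)
    (hτsemi : ∀ (c : E) (x : Fin (2*n) → E), τ (c • x) = σ c • τ x)
    (hτbaer : ∃ b : Basis (Fin (2*n)) E (Fin (2*n) → E), ∀ i, τ (b i) = b i) :
    (∀ v : Fin (2*n) → E, v ≠ 0 → τ v = v →
        ∃ U : Submodule E (Fin (2*n) → E), finrank E ↥U = 2*n - 1 ∧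
          (∀ x, x ∈ U ↔ τ x ∈ U) ∧
          ∀ p : Submodule E (Fin (2*n) → E),
            finrank E ↥p = 1 → (∃ u ∈ p, u ≠ 0 ∧ τ u = u) →
            (p ≤ U ↔ ∀ u ∈ p, B.toFun v u = 0)) ↔
      (∀ v, B.toFun v v = 0 ↔ B.toFun (τ v) (τ v) = 0) := by
  obtain ⟨b, hb⟩ := hτbaer
  obtain ⟨θ, hθ⟩ := DFunLike.ne_iff.mp hσ
  let τₛₗ : (Fin (2*n) → E) →ₛₗ[(σ : E →+* E)] (Fin (2*n) → E) := ⟨⟨τ, hτadd⟩, hτsemi⟩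
  have := SesquiForm.inducesPolarity_iff (σ := (σ : E →+* E)) hinv hθ
    (fun _ => exists_mul_apply_eq hFE hσ) (fun _ => exists_add_apply_eq hFE hσ) hB b
    (τ := τₛₗ) hb
  simp only [SesquiForm.InducesPolarity, Module.finrank_fin_fun] at this
  exact this

/-- Let `q` be a prime power, `E = GF(q²)` a quadratic extension of
`F = GF(q)`, and `σ` the nontrivial automorphism of `E/F` (an involution). Let
`H(2n-1,q²)` be the Hermitian variety of `PG(2n-1,q²)` given by a nondegenerate Hermitian
form `B` on `E^(2n)` relative to `σ`, with associated Hermitian polarity `⊥`, let `Σ` be a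
Baer subgeometry of `PG(2n-1,q²)` and let `τ` be the Baer involution (a `σ`-semilinear
involution of `E^(2n)` whose fixed vectors form an `F`-form) fixing `Σ` pointwise. Then
`H(2n-1,q²)` induces a polarity on `Σ` (i.e. for every point `P` of `Σ`, the set of points
of `Σ` in `P^⊥` is a hyperplane of `Σ`, that is, the trace on `Σ` of a `τ`-invariant
hyperplane of `PG(2n-1,q²)`) if and only if `τ` fixes `H(2n-1,q²)` setwise. -/
theorem baer_polarity_iff_involution_fixes_hermitian
    (F E : Type) [Field F] [Field E] [Fintype F] [Fintype E] [Algebra F E]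
    (hFE : finrank F E = 2)
    (σ : E ≃ₐ[F] E) (hσ : σ ≠ AlgEquiv.refl) (hinv : ∀ x, σ (σ x) = x)
    (n : ℕ) (hn : 1 ≤ n)
    (B : SesquiForm E (⇑σ) (Fin (2*n) → E)) (hB : B.Nondeg)
    (τ : (Fin (2*n) → E) → (Fin (2*n) → E))
    (hτadd : ∀ x y, τ (x + y) = τ x + τ y)
    (hτsemi : ∀ (c : E) (x : Fin (2*n) → E), τ (c • x) = σ c • τ x)
    (hτinvol : ∀ x, τ (τ x) = x)
    (hτbaer : ∃ b : Basis (Fin (2*n)) E (Fin (2*n) → E), ∀ i, τ (b i) = b i) :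
    (∀ v : Fin (2*n) → E, v ≠ 0 → τ v = v →
        ∃ U : Submodule E (Fin (2*n) → E), finrank E ↥U = 2*n - 1 ∧
          (∀ x, x ∈ U ↔ τ x ∈ U) ∧
          ∀ p : Submodule E (Fin (2*n) → E),
            finrank E ↥p = 1 → (∃ u ∈ p, u ≠ 0 ∧ τ u = u) →
            (p ≤ U ↔ ∀ u ∈ p, B.toFun v u = 0)) ↔
      (∀ v, B.toFun v v = 0 ↔ B.toFun (τ v) (τ v) = 0) :=
  baer_polarity_iff_involution_fixes_hermitian_general F E hFE σ hσ hinv n B hB τ hτadd hτsemi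
    hτbaer
end

section
/- Let q be a prime power, let H(2n−1,q²) be a non-degenerate Hermitian variety of PG(2n−1,q²), and let Σ be a Baer subgeometry of PG(2n−1,q²). Then Σ is embedded in H(2n−1,q²) (i.e., every point of Σ lies on H(2n−1,q²)) if and only if H(2n−1,q²) induces a symplectic polarity on Σ. -/
open Module

/-!
On a totally isotropic `W`, expanding `B (v + w) (v + w) = 0` gives `σ (B v w) = -B v w`.
The `σ`-skew elements of `E` form a proper `F`-subspace of the quadratic extension, hence at
most a line, so some `F`-linear functional `f : E → F` vanishes on no nonzero skew element.
Then `J = f ∘ B|_W` is an alternating `F`-bilinear form with the same orthogonality relation as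
`B` on `W`, and it is nondegenerate because `W` spans `E^(2n)` and `B` is nondegenerate.
Conversely, if such an alternating `J` exists then `J v v = 0` makes every `v ∈ W` isotropic.
-/

namespace SesquiForm

section

variable {E V : Type*} [Field E] {σ : E → E} [AddCommGroup V] [Module E V]
  (B : SesquiForm E σ V)

theorem apply_zero_right (v : V) : B.toFun v 0 = 0 := by
  simpa using B.add_right v 0 0

theorem map_apply_eq_neg_of_isotropic {v w : V} (hv : B.toFun v v = 0) (hw : B.toFun w w = 0)
    (hvw : B.toFun (v + w) (v + w) = 0) : σ (B.toFun v w) = -B.toFun v w := by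
  rw [B.add_left, B.add_right, B.add_right, hv, hw, B.conj_symm v w] at hvw
  linear_combination hvw

theorem eq_zero_of_forall_mem_span_eq_top (hB : B.Nondeg) {S : Set V}
    (hS : Submodule.span E S = ⊤) {v : V} (hv : ∀ w ∈ S, B.toFun v w = 0) : v = 0 := by
  refine hB v fun u => ?_
  have hu : u ∈ Submodule.span E S := hS ▸ Submodule.mem_top
  induction hu using Submodule.span_induction with
  | mem w hw => exact hv w hw
  | zero => exact B.apply_zero_right v
  | add x y _ _ hx hy => rw [B.add_right, hx, hy, add_zero]
  | smul c x _ hx => rw [B.smul_right, hx, mul_zero]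

end

def restrictScalarsBilin {F E V : Type*} [Field F] [Field E] [Algebra F E] [AddCommGroup V]
    [Module E V] [Module F V] [IsScalarTower F E V] (σ : E →ₐ[F] E) (B : SesquiForm E σ V)
    (W : Submodule F V) : W →ₗ[F] W →ₗ[F] E :=
  LinearMap.mk₂ F (fun v w => B.toFun v w)
    (fun v v' w => B.add_left v v' w)
    (fun c v w => by
      simp only [Submodule.coe_smul, ← algebraMap_smul E c (v : V), B.smul_left,
        Algebra.smul_def])
    (fun v w w' => B.add_right v w w')
    (fun c v w => by
      simp only [Submodule.coe_smul, ← algebraMap_smul E c (w : V), B.smul_right, σ.commutes,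
        Algebra.smul_def])

end SesquiForm

section AntiFixed

variable {F E : Type*} [Field F] [Field E] [Algebra F E]

def antiFixed (σ : E ≃ₐ[F] E) : Submodule F E :=
  LinearMap.ker (σ.toLinearMap + LinearMap.id)

theorem mem_antiFixed {σ : E ≃ₐ[F] E} {x : E} : x ∈ antiFixed σ ↔ σ x = -x := by
  simp [antiFixed, add_eq_zero_iff_eq_neg]

theorem antiFixed_ne_top {σ : E ≃ₐ[F] E} (hσ : σ ≠ AlgEquiv.refl) : antiFixed σ ≠ ⊤ := by
  intro htop
  have hneg : ∀ x, σ x = -x := fun x => mem_antiFixed.mp (htop ▸ Submodule.mem_top)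
  -- `σ 1 = 1` forces `-1 = 1`, so negation is the identity and so is `σ`
  have hone : (-1 : E) = 1 := by simpa using (hneg 1).symm
  exact hσ (AlgEquiv.ext fun x => by
    rw [hneg, ← neg_one_mul, hone, one_mul]; rfl)

theorem finrank_antiFixed_le_one (hFE : finrank F E = 2) {σ : E ≃ₐ[F] E}
    (hσ : σ ≠ AlgEquiv.refl) : finrank F (antiFixed σ) ≤ 1 := by
  have : FiniteDimensional F E := .of_finrank_eq_succ hFE
  have := Submodule.finrank_lt (antiFixed_ne_top hσ)
  omega

end AntiFixed

theorem Submodule.exists_dual_injOn_of_finrank_le_one {K V : Type*} [Field K] [AddCommGroup V]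
    [Module K V] (U : Submodule K V) [FiniteDimensional K U] (hU : finrank K U ≤ 1) :
    ∃ f : Module.Dual K V, ∀ u ∈ U, f u = 0 → u = 0 := by
  obtain ⟨⟨g, _⟩, hg⟩ := finrank_le_one_iff.mp hU
  have hmul : ∀ u ∈ U, ∃ c : K, c • g = u := fun u hu => by
    obtain ⟨c, hc⟩ := hg ⟨u, hu⟩
    exact ⟨c, congrArg Subtype.val hc⟩
  by_cases hg0 : g = 0
  · refine ⟨0, fun u hu _ => ?_⟩
    obtain ⟨c, rfl⟩ := hmul u hu
    simp [hg0]
  · obtain ⟨f, hf⟩ := Module.Projective.exists_dual_eq_one K hg0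
    refine ⟨f, fun u hu hfu => ?_⟩
    obtain ⟨c, rfl⟩ := hmul u hu
    rw [map_smul, hf, smul_eq_mul, mul_one] at hfu
    rw [hfu, zero_smul]

theorem baer_embedded_iff_induces_symplectic_polarity_general
    (F E : Type) [Field F] [Field E] [Algebra F E]
    (hFE : finrank F E = 2)
    (σ : E ≃ₐ[F] E) (hσ : σ ≠ AlgEquiv.refl)
    (n : ℕ)
    (B : SesquiForm E (⇑σ) (Fin (2*n) → E)) (hB : B.Nondeg)
    (W : Submodule F (Fin (2*n) → E)) (hW : IsBaerForm E (2*n) W) :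
    (∀ v ∈ W, B.toFun v v = 0) ↔
      ∃ J : LinearMap.BilinForm F ↥W, LinearMap.IsAlt J ∧
        LinearMap.BilinForm.Nondegenerate J ∧
        ∀ v w : ↥W, (B.toFun ↑v ↑w = 0 ↔ J v w = 0) := by
  refine ⟨fun hiso => ?_, fun ⟨J, hJ, _, hBJ⟩ v hv => (hBJ ⟨v, hv⟩ ⟨v, hv⟩).mpr (hJ ⟨v, hv⟩)⟩
  have : FiniteDimensional F E := .of_finrank_eq_succ hFE
  have hskew (v w : W) : B.toFun v w ∈ antiFixed σ :=
    mem_antiFixed.mpr <| B.map_apply_eq_neg_of_isotropic (hiso v v.2) (hiso w w.2)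
      (hiso _ (W.add_mem v.2 w.2))
  obtain ⟨f, hf⟩ := (antiFixed σ).exists_dual_injOn_of_finrank_le_one
    (finrank_antiFixed_le_one hFE hσ)
  let J : LinearMap.BilinForm F W := (B.restrictScalarsBilin σ.toAlgHom W).compr₂ f
  have hBJ (v w : W) : B.toFun v w = 0 ↔ J v w = 0 :=
    ⟨fun h => show f (B.toFun v w) = 0 by rw [h, map_zero], hf _ (hskew v w)⟩
  have hJ : J.IsAlt := fun v => (hBJ v v).mp (hiso v v.2)
  refine ⟨J, hJ, hJ.isRefl.nondegenerate_iff_separatingLeft.mpr fun v hv => ?_, hBJ⟩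
  exact Subtype.ext <| B.eq_zero_of_forall_mem_span_eq_top hB hW.1 fun w hw =>
    (hBJ v ⟨w, hw⟩).mpr (hv ⟨w, hw⟩)

/-- Let `q` be a prime power, `E = GF(q²)` a quadratic extension of
`F = GF(q)` with nontrivial automorphism `σ`, let `H(2n-1,q²)` be the Hermitian variety
given by a nondegenerate Hermitian form `B` on `E^(2n)` relative to `σ`, and let `Σ` be the
Baer subgeometry of `PG(2n-1,q²)` determined by an `F`-form `W`. Then `Σ` is embedded in
`H(2n-1,q²)` (every point of `Σ` lies on the variety) if and only if `H(2n-1,q²)` induces a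
symplectic polarity on `Σ`, i.e. there is a nondegenerate alternating `F`-bilinear form `J`
on `W` whose orthogonality relation coincides with the one induced by `B` on `W`. -/
theorem baer_embedded_iff_induces_symplectic_polarity
    (F E : Type) [Field F] [Field E] [Fintype F] [Fintype E] [Algebra F E]
    (hFE : finrank F E = 2)
    (σ : E ≃ₐ[F] E) (hσ : σ ≠ AlgEquiv.refl) (hinv : ∀ x, σ (σ x) = x)
    (n : ℕ) (hn : 1 ≤ n)
    (B : SesquiForm E (⇑σ) (Fin (2*n) → E)) (hB : B.Nondeg)
    (W : Submodule F (Fin (2*n) → E)) (hW : IsBaerForm E (2*n) W) :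
    (∀ v ∈ W, B.toFun v v = 0) ↔
      ∃ J : LinearMap.BilinForm F ↥W, LinearMap.IsAlt J ∧
        LinearMap.BilinForm.Nondegenerate J ∧
        ∀ v w : ↥W, (B.toFun ↑v ↑w = 0 ↔ J v w = 0) :=
  baer_embedded_iff_induces_symplectic_polarity_general F E hFE σ hσ n B hB W hW
end
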